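/- arXiv:2210.05403 — 7 statements merged into one kernel-verified Lean document; each statement's English description precedes it below -/
import Mathlib

section
/- Call a non-root vertex u light if 2·s(u) ≤ s(parent u). Then for every vertex v, the number of natural numbers k such that parent^[k] v ≠ r and parent^[k] v is light is at most Nat.log 2 (Fintype.card V). (This is the key property of the heavy path decomposition of Sleator–Tarjan: on any root-to-leaf path, the number of different heavy paths encountered is O(log n).) -/
/-!
Going from `u` to `parent u` never decreases the subtree size, and out of a light vertex it at
least doubles it. So if `j` of the first `n` vertices of the path `v, parent v, parent² v, …` are
light, the subtree size of the `n`-th one is at least `2 ^ j`, while it is at most `|V|`. This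
bounds the light positions in every prefix of the path, hence their total number.
-/

open Finset

section Descendants

variable {V : Type*} (parent : V → V)

theorem ncard_descendants_pos [Finite V] (v : V) :
    0 < {u | Relation.ReflTransGen (fun a b => b = parent a) u v}.ncard :=
  (Set.ncard_pos (Set.toFinite _)).2 ⟨v, Relation.ReflTransGen.refl⟩

theorem ncard_descendants_le_parent [Finite V] (v : V) :
    {u | Relation.ReflTransGen (fun a b => b = parent a) u v}.ncard ≤
      {u | Relation.ReflTransGen (fun a b => b = parent a) u (parent v)}.ncard :=
  Set.ncard_le_ncard (fun _ hu => Relation.ReflTransGen.tail hu rfl) (Set.toFinite _)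

end Descendants

theorem two_pow_card_filter_mul_le {a : ℕ → ℕ} {P : ℕ → Prop} [DecidablePred P]
    (hmono : ∀ k, a k ≤ a (k + 1)) (hdouble : ∀ k, P k → 2 * a k ≤ a (k + 1)) (n : ℕ) :
    2 ^ ((range n).filter P).card * a 0 ≤ a n := by
  induction n with
  | zero => simp
  | succ n ih =>
    rw [range_add_one, filter_insert]
    by_cases hn : P n
    · rw [if_pos hn, card_insert_of_notMem (by simp), pow_succ]
      calc _ = 2 * (2 ^ ((range n).filter P).card * a 0) := by ring
        _ ≤ 2 * a n := Nat.mul_le_mul_left 2 ih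
        _ ≤ a (n + 1) := hdouble n hn
    · rw [if_neg hn]
      exact ih.trans (hmono n)

theorem Set.ncard_setOf_le_of_card_filter_range_le {P : ℕ → Prop} [DecidablePred P] {m : ℕ}
    (h : ∀ n, ((Finset.range n).filter P).card ≤ m) : {k | P k}.ncard ≤ m := by
  by_cases hfin : {k | P k}.Finite
  · obtain ⟨N, hN⟩ := hfin.bddAbove
    have hsub : {k | P k} ⊆ ↑((Finset.range (N + 1)).filter P) := fun k hk => by
      simpa [Nat.lt_succ_iff] using And.intro (hN hk) hk
    calc {k | P k}.ncard ≤ (↑((Finset.range (N + 1)).filter P) : Set ℕ).ncard :=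
          Set.ncard_le_ncard hsub (Finset.finite_toSet _)
      _ ≤ m := by rw [Set.ncard_coe_finset]; exact h _
  · rw [Set.Infinite.ncard hfin]
    exact Nat.zero_le m

theorem stmt1_general {V : Type*} [Fintype V] (r : V) (parent : V → V)
    (s : V → ℕ)
    (hs : ∀ v, s v = {u | Relation.ReflTransGen (fun a b => b = parent a) u v}.ncard)
    (v : V) :
    {k : ℕ | parent^[k] v ≠ r ∧ 2 * s (parent^[k] v) ≤ s (parent (parent^[k] v))}.ncard
      ≤ Nat.log 2 (Fintype.card V) := by
  classical
  refine Set.ncard_setOf_le_of_card_filter_range_le fun n => ?_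
  have hmono : ∀ k, s (parent^[k] v) ≤ s (parent^[k + 1] v) := fun k => by
    rw [Function.iterate_succ_apply', hs, hs]
    exact ncard_descendants_le_parent parent _
  have hpos : 0 < s v := hs v ▸ ncard_descendants_pos parent v
  have hle_card : s (parent^[n] v) ≤ Fintype.card V := by
    rw [hs, ← Nat.card_eq_fintype_card]
    exact Set.ncard_le_card _
  rw [Nat.le_log_iff_pow_le (by norm_num) (Fintype.card_pos_iff.2 ⟨v⟩).ne']
  calc _ ≤ 2 ^ _ * s (parent^[0] v) := Nat.le_mul_of_pos_right _ hpos
    _ ≤ s (parent^[n] v) := two_pow_card_filter_mul_le hmono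
        (fun k hk => (Function.iterate_succ_apply' parent k v).symm ▸ hk.2) n
    _ ≤ Fintype.card V := hle_card

/-- Key property of the heavy path decomposition: calling a non-root vertex `u` *light*
when `2 * s u ≤ s (parent u)`, the number of light strict ancestors (including the vertex
itself) encountered on the way from any vertex `v` to the root is at most `log₂ |V|`. -/
theorem stmt1 {V : Type*} [Fintype V] (r : V) (parent : V → V) (hr : parent r = r)
    (dep : V → ℕ) (hdep0 : dep r = 0) (hdep : ∀ v, v ≠ r → dep v = dep (parent v) + 1)
    (s : V → ℕ)
    (hs : ∀ v, s v = {u | Relation.ReflTransGen (fun a b => b = parent a) u v}.ncard)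
    (v : V) :
    {k : ℕ | parent^[k] v ≠ r ∧ 2 * s (parent^[k] v) ≤ s (parent (parent^[k] v))}.ncard
      ≤ Nat.log 2 (Fintype.card V) :=
  stmt1_general r parent s hs v
end

section
/- Let I₁ ≤ I₂ be reals. For every i ∈ P, the point i satisfies I₁ ≤ x i ≤ I₂ and has the maximum weight among the points of P of color c i with position in [I₁, I₂], if and only if (I₁ : EReal) > L i, I₁ ≤ x i, x i ≤ I₂, and (I₂ : EReal) < R i. Consequently, the answer to the sum-max query on [I₁, I₂] equals the sum of w i over exactly those i ∈ P whose associated planar rectangle (L i, x i] × [x i, R i) contains the point (I₁, I₂); this reduces the sum-max problem to weighted rectangle stabbing. -/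
/-!
A heavier point `j` of the color of `i` lying in `[I₁, I₂]` must sit either left of `i`,
hence at a position `≤ L i`, or right of `i`, hence at a position `≥ R i` (positions within a
color are distinct). So `i` is the heaviest point of its color in the window exactly when
`L i < I₁` and `I₂ < R i`. Since weights within a color are distinct, each color present in
the window has exactly one such heaviest point, and the sum-max query is the sum of their
weights.
-/

theorem Set.Finite.sSup_lt_iff {α : Type*} [CompleteLinearOrder α] {s : Set α} {a : α}
    (hs : s.Finite) (ha : ⊥ < a) : sSup s < a ↔ ∀ b ∈ s, b < a := by
  rcases s.eq_empty_or_nonempty with rfl | hne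
  · simp [ha]
  · exact hs.csSup_lt_iff hne

theorem Set.Finite.lt_sInf_iff {α : Type*} [CompleteLinearOrder α] {s : Set α} {a : α}
    (hs : s.Finite) (ha : a < ⊤) : a < sInf s ↔ ∀ b ∈ s, a < b :=
  Set.Finite.sSup_lt_iff (α := αᵒᵈ) hs ha

theorem Finset.sup_eq_of_forall_le {α β : Type*} [SemilatticeSup β] [OrderBot β]
    {s : Finset α} {f : α → β} {a : α} (ha : a ∈ s) (hmax : ∀ b ∈ s, f b ≤ f a) :
    s.sup f = f a :=
  le_antisymm (Finset.sup_le hmax) (Finset.le_sup ha)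

open Classical in
theorem Finset.sum_image_sup_filter_eq_sum_filter_max {ι γ β : Type*} [DecidableEq γ]
    [LinearOrder β] [OrderBot β] [AddCommMonoid β] (P : Finset ι) (c : ι → γ) (f : ι → β)
    (p : ι → Prop) [DecidablePred p]
    (hf : ∀ i ∈ P, ∀ j ∈ P, c i = c j → i ≠ j → f i ≠ f j) :
    ∑ g ∈ (P.filter p).image c, (P.filter (fun i => c i = g ∧ p i)).sup f
      = ∑ i ∈ P.filter (fun i => p i ∧ ∀ j ∈ P, c j = c i → p j → f j ≤ f i), f i := by
  refine (Finset.sum_bij (fun i _ => c i) ?_ ?_ ?_ ?_).symm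
  · intro i hi
    simp only [Finset.mem_filter] at hi
    exact Finset.mem_image_of_mem c (Finset.mem_filter.mpr ⟨hi.1, hi.2.1⟩)
  · intro i₁ hi₁ i₂ hi₂ hc
    simp only [Finset.mem_filter] at hi₁ hi₂
    by_contra hne
    exact hf i₁ hi₁.1 i₂ hi₂.1 hc hne <|
      le_antisymm (hi₂.2.2 i₁ hi₁.1 hc hi₁.2.1) (hi₁.2.2 i₂ hi₂.1 hc.symm hi₂.2.1)
  · intro g hg
    obtain ⟨i, hi, rfl⟩ := Finset.mem_image.mp hg
    simp only [Finset.mem_filter] at hi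
    obtain ⟨b, hb, hbmax⟩ := Finset.exists_max_image (P.filter fun j => c j = c i ∧ p j) f
      ⟨i, Finset.mem_filter.mpr ⟨hi.1, rfl, hi.2⟩⟩
    simp only [Finset.mem_filter] at hb hbmax
    refine ⟨b, Finset.mem_filter.mpr ⟨hb.1, hb.2.2, fun j hj hcj hpj => ?_⟩, hb.2.1⟩
    exact hbmax j ⟨hj, hcj.trans hb.2.1, hpj⟩
  · intro i hi
    simp only [Finset.mem_filter] at hi
    refine (Finset.sup_eq_of_forall_le (Finset.mem_filter.mpr ⟨hi.1, rfl, hi.2.1⟩) ?_).symm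
    intro j hj
    simp only [Finset.mem_filter] at hj
    exact hi.2.2 j hj.1 hj.2.1 hj.2.2

section StabbingRectangle

variable {ι γ : Type*} {P : Finset ι} {x : ι → ℝ} {c : ι → γ} {w : ι → ℝ} {L R : ι → EReal}
  {i : ι}

theorem lt_coe_iff_of_eq_sSup
    (hLi : L i = sSup {t : EReal | ∃ j ∈ P, c j = c i ∧ w j > w i ∧ x j < x i ∧ t = (x j : EReal)})
    (a : ℝ) : L i < a ↔ ∀ j ∈ P, c j = c i → w i < w j → x j < x i → x j < a := by
  have hfin : {t : EReal | ∃ j ∈ P, c j = c i ∧ w j > w i ∧ x j < x i ∧ t = x j}.Finite :=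
    (P.finite_toSet.image fun j => (x j : EReal)).subset <| by
      rintro t ⟨j, hj, -, -, -, rfl⟩
      exact ⟨j, hj, rfl⟩
  rw [hLi, hfin.sSup_lt_iff (EReal.bot_lt_coe a)]
  constructor
  · intro h j hj hc hw hx
    exact EReal.coe_lt_coe_iff.mp (h _ ⟨j, hj, hc, hw, hx, rfl⟩)
  · rintro h _ ⟨j, hj, hc, hw, hx, rfl⟩
    exact EReal.coe_lt_coe_iff.mpr (h j hj hc hw hx)

theorem coe_lt_iff_of_eq_sInf
    (hRi : R i = sInf {t : EReal | ∃ j ∈ P, c j = c i ∧ w j > w i ∧ x j > x i ∧ t = (x j : EReal)})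
    (a : ℝ) : (a : EReal) < R i ↔ ∀ j ∈ P, c j = c i → w i < w j → x i < x j → a < x j := by
  have hfin : {t : EReal | ∃ j ∈ P, c j = c i ∧ w j > w i ∧ x j > x i ∧ t = x j}.Finite :=
    (P.finite_toSet.image fun j => (x j : EReal)).subset <| by
      rintro t ⟨j, hj, -, -, -, rfl⟩
      exact ⟨j, hj, rfl⟩
  rw [hRi, hfin.lt_sInf_iff (EReal.coe_lt_top a)]
  constructor
  · intro h j hj hc hw hx
    exact EReal.coe_lt_coe_iff.mp (h _ ⟨j, hj, hc, hw, hx, rfl⟩)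
  · rintro h _ ⟨j, hj, hc, hw, hx, rfl⟩
    exact EReal.coe_lt_coe_iff.mpr (h j hj hc hw hx)

theorem isMax_in_window_iff_stabs (hi : i ∈ P)
    (hxdist : ∀ i ∈ P, ∀ j ∈ P, c i = c j → i ≠ j → x i ≠ x j)
    (hLi : L i = sSup {t : EReal | ∃ j ∈ P, c j = c i ∧ w j > w i ∧ x j < x i ∧ t = (x j : EReal)})
    (hRi : R i = sInf {t : EReal | ∃ j ∈ P, c j = c i ∧ w j > w i ∧ x j > x i ∧ t = (x j : EReal)})
    (I₁ I₂ : ℝ) :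
    (I₁ ≤ x i ∧ x i ≤ I₂ ∧ ∀ j ∈ P, c j = c i → I₁ ≤ x j → x j ≤ I₂ → w j ≤ w i) ↔
      (L i < (I₁ : EReal) ∧ I₁ ≤ x i ∧ x i ≤ I₂ ∧ (I₂ : EReal) < R i) := by
  rw [lt_coe_iff_of_eq_sSup hLi, coe_lt_iff_of_eq_sInf hRi]
  constructor
  · rintro ⟨h₁, h₂, hmax⟩
    refine ⟨fun j hj hc hw hx => ?_, h₁, h₂, fun j hj hc hw hx => ?_⟩
    · by_contra! h
      exact (hmax j hj hc h (hx.le.trans h₂)).not_gt hw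
    · by_contra! h
      exact (hmax j hj hc (h₁.trans hx.le) h).not_gt hw
  · rintro ⟨hleft, h₁, h₂, hright⟩
    refine ⟨h₁, h₂, fun j hj hc hj₁ hj₂ => ?_⟩
    by_contra! hw
    have hne : x j ≠ x i := hxdist j hj i hi hc (by rintro rfl; exact lt_irrefl _ hw)
    rcases hne.lt_or_gt with hx | hx
    · exact (hleft j hj hc hw hx).not_ge hj₁
    · exact (hright j hj hc hw hx).not_ge hj₂

end StabbingRectangle

open Classical in
theorem stmt2_general {ι γ : Type*} [DecidableEq γ] (P : Finset ι)
    (x : ι → ℝ) (c : ι → γ) (w : ι → ℝ)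
    (hxdist : ∀ i ∈ P, ∀ j ∈ P, c i = c j → i ≠ j → x i ≠ x j)
    (hwdist : ∀ i ∈ P, ∀ j ∈ P, c i = c j → i ≠ j → w i ≠ w j)
    (L R : ι → EReal)
    (hL : ∀ i ∈ P, L i =
      sSup {t : EReal | ∃ j ∈ P, c j = c i ∧ w j > w i ∧ x j < x i ∧ t = (x j : EReal)})
    (hR : ∀ i ∈ P, R i =
      sInf {t : EReal | ∃ j ∈ P, c j = c i ∧ w j > w i ∧ x j > x i ∧ t = (x j : EReal)})
    (I₁ I₂ : ℝ) :
    (∀ i ∈ P,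
      ((I₁ ≤ x i ∧ x i ≤ I₂ ∧
          ∀ j ∈ P, c j = c i → I₁ ≤ x j → x j ≤ I₂ → w j ≤ w i) ↔
        (L i < (I₁ : EReal) ∧ I₁ ≤ x i ∧ x i ≤ I₂ ∧ (I₂ : EReal) < R i)))
    ∧
    (∑ γ₀ ∈ (P.filter (fun i => I₁ ≤ x i ∧ x i ≤ I₂)).image c,
        (P.filter (fun i => c i = γ₀ ∧ I₁ ≤ x i ∧ x i ≤ I₂)).sup (fun i => (w i : EReal)))
      = ∑ i ∈ P.filter
            (fun i => L i < (I₁ : EReal) ∧ I₁ ≤ x i ∧ x i ≤ I₂ ∧ (I₂ : EReal) < R i),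
          (w i : EReal) := by
  have key i (hi : i ∈ P) := isMax_in_window_iff_stabs hi hxdist (hL i hi) (hR i hi) I₁ I₂
  refine ⟨key, ?_⟩
  rw [Finset.sum_image_sup_filter_eq_sum_filter_max P c (fun i => (w i : EReal)) _
    fun i hi j hj hc hne => by exact_mod_cast hwdist i hi j hj hc hne]
  refine Finset.sum_congr (Finset.filter_congr fun i hi => ?_) fun _ _ => rfl
  rw [← key i hi]
  simp only [EReal.coe_le_coe_iff, and_assoc, and_imp]

open Classical in
/-- Reduction of sum-max queries to weighted rectangle stabbing: a point `i` is the
maximum-weight point of its color inside `[I₁, I₂]` iff the query point `(I₁, I₂)` stabs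
the rectangle `(L i, x i] × [x i, R i)`; consequently the answer to the sum-max query
equals the total weight of the stabbed rectangles. -/
theorem stmt2 {ι γ : Type*} [DecidableEq γ] (P : Finset ι)
    (x : ι → ℝ) (c : ι → γ) (w : ι → ℝ)
    (hxdist : ∀ i ∈ P, ∀ j ∈ P, c i = c j → i ≠ j → x i ≠ x j)
    (hwdist : ∀ i ∈ P, ∀ j ∈ P, c i = c j → i ≠ j → w i ≠ w j)
    (L R : ι → EReal)
    (hL : ∀ i ∈ P, L i =
      sSup {t : EReal | ∃ j ∈ P, c j = c i ∧ w j > w i ∧ x j < x i ∧ t = (x j : EReal)})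
    (hR : ∀ i ∈ P, R i =
      sInf {t : EReal | ∃ j ∈ P, c j = c i ∧ w j > w i ∧ x j > x i ∧ t = (x j : EReal)})
    (I₁ I₂ : ℝ) (hI : I₁ ≤ I₂) :
    (∀ i ∈ P,
      ((I₁ ≤ x i ∧ x i ≤ I₂ ∧
          ∀ j ∈ P, c j = c i → I₁ ≤ x j → x j ≤ I₂ → w j ≤ w i) ↔
        (L i < (I₁ : EReal) ∧ I₁ ≤ x i ∧ x i ≤ I₂ ∧ (I₂ : EReal) < R i)))
    ∧
    (∑ γ₀ ∈ (P.filter (fun i => I₁ ≤ x i ∧ x i ≤ I₂)).image c,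
        (P.filter (fun i => c i = γ₀ ∧ I₁ ≤ x i ∧ x i ≤ I₂)).sup (fun i => (w i : EReal)))
      = ∑ i ∈ P.filter
            (fun i => L i < (I₁ : EReal) ∧ I₁ ≤ x i ∧ x i ≤ I₂ ∧ (I₂ : EReal) < R i),
          (w i : EReal) :=
  stmt2_general P x c w hxdist hwdist L R hL hR I₁ I₂
end

section
/- Let S : Finset (ℕ × ℕ) be nonempty with w ≥ 1 for every (i, w) ∈ S. Then (S.biUnion Anc).card = (S.sup Prod.fst + 1) + ∑_{i ∈ S.image Prod.fst} ((S.filter (fun p => p.1 = i)).sup Prod.snd). That is, on a generalized caterpillar the number of distinct ancestors of the colors of the query points equals a range-maximum over the central path plus, for each leg, the maximum weight of a query point assigned to that leg; hence an unweighted HCC query on the caterpillar computes the answer to the sum-max instance. -/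
/-- The ancestor set of the leg vertex `(i, w)` of a generalized caterpillar:
the central-path vertices `0, …, i` together with the leg vertices `(i, 1), …, (i, w)`. -/
def Anc (p : ℕ × ℕ) : Finset (ℕ ⊕ ℕ × ℕ) :=
  ((Finset.Iic p.1).image Sum.inl) ∪ ((Finset.Icc 1 p.2).image (fun v => Sum.inr (p.1, v)))

/-!
Spine prefixes `0, …, n` and leg prefixes `(i, 1), …, (i, w)` are each nested, so a union of
ancestor sets is the spine prefix up to the largest central index together with, on each leg,
the prefix up to the largest weight on that leg; these pieces are pairwise disjoint.
-/

namespace Caterpillar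

open Finset

def spine (n : ℕ) : Finset (ℕ ⊕ ℕ × ℕ) :=
  (Iic n).image Sum.inl

def leg (i w : ℕ) : Finset (ℕ ⊕ ℕ × ℕ) :=
  (Icc 1 w).image fun v => Sum.inr (i, v)

theorem anc_eq_spine_union_leg (p : ℕ × ℕ) : Anc p = spine p.1 ∪ leg p.1 p.2 := rfl

theorem spine_mono : Monotone spine :=
  fun _ _ h => image_subset_image (Iic_subset_Iic.2 h)

theorem leg_mono (i : ℕ) : Monotone (leg i) :=
  fun _ _ h => image_subset_image (Icc_subset_Icc_right h)

theorem card_spine (n : ℕ) : (spine n).card = n + 1 := by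
  rw [spine, card_image_of_injective _ Sum.inl_injective, Nat.card_Iic]

theorem card_leg (i w : ℕ) : (leg i w).card = w := by
  rw [leg, card_image_of_injective _ fun _ _ h => by simpa using h, Nat.card_Icc,
    Nat.add_sub_cancel]

theorem disjoint_spine_leg (n i w : ℕ) : Disjoint (spine n) (leg i w) := by
  simp [spine, leg, disjoint_left]

theorem disjoint_leg_leg {i j : ℕ} (h : i ≠ j) (w w' : ℕ) : Disjoint (leg i w) (leg j w') := by
  simp only [leg, disjoint_left, mem_image, not_exists, not_and]
  rintro _ ⟨v, -, rfl⟩ v' - h'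
  exact h (congrArg Prod.fst (Sum.inr_injective h')).symm

theorem biUnion_comp_eq_of_monotone {ι α : Type*} [DecidableEq α] {g : ℕ → Finset α}
    (hg : Monotone g) {s : Finset ι} (hs : s.Nonempty) (f : ι → ℕ) :
    s.biUnion (g ∘ f) = g (s.sup f) := by
  rw [← sup_eq_biUnion, apply_sup_eq_sup_comp_of_nonempty hg hs]

theorem biUnion_anc {S : Finset (ℕ × ℕ)} (hS : S.Nonempty) :
    S.biUnion Anc = spine (S.sup Prod.fst) ∪
      (S.image Prod.fst).biUnion fun i => leg i ((S.filter fun p => p.1 = i).sup Prod.snd) := by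
  have legs_fiberwise : S.biUnion (fun p => leg p.1 p.2) =
      (S.image Prod.fst).biUnion fun i => leg i ((S.filter fun p => p.1 = i).sup Prod.snd) := by
    conv_lhs => rw [← image_biUnion_filter_eq S Prod.fst, biUnion_biUnion]
    refine biUnion_congr rfl fun i hi => ?_
    obtain ⟨p, hp, rfl⟩ := mem_image.1 hi
    have hfiber : (S.filter fun q => q.1 = p.1).Nonempty := ⟨p, mem_filter.2 ⟨hp, rfl⟩⟩
    rw [← biUnion_comp_eq_of_monotone (leg_mono p.1) hfiber]
    exact biUnion_congr rfl fun q hq => by rw [(mem_filter.1 hq).2]; rfl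
  rw [show Anc = fun p => spine p.1 ∪ leg p.1 p.2 from funext anc_eq_spine_union_leg,
    biUnion_union, ← legs_fiberwise, ← biUnion_comp_eq_of_monotone spine_mono hS]
  rfl

end Caterpillar

theorem stmt7_general (S : Finset (ℕ × ℕ)) (hS : S.Nonempty) :
    (S.biUnion Anc).card =
      (S.sup Prod.fst + 1) +
        ∑ i ∈ S.image Prod.fst, (S.filter (fun p => p.1 = i)).sup Prod.snd := by
  rw [Caterpillar.biUnion_anc hS, Finset.card_union_of_disjoint, Caterpillar.card_spine,
    Finset.card_biUnion]
  · simp only [Caterpillar.card_leg]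
  · exact fun i _ j _ hij => Caterpillar.disjoint_leg_leg hij _ _
  · exact (Finset.disjoint_biUnion_right _ _ _).2 fun i _ => Caterpillar.disjoint_spine_leg _ _ _

/-- On a generalized caterpillar, the number of distinct ancestors of the colors of the
query points equals a range maximum over the central path plus, for each leg, the maximum
weight of a query point assigned to that leg; hence an unweighted HCC query on the
caterpillar computes the answer to the sum-max instance. -/
theorem stmt7 (S : Finset (ℕ × ℕ)) (hS : S.Nonempty) (hw : ∀ p ∈ S, 1 ≤ p.2) :
    (S.biUnion Anc).card =
      (S.sup Prod.fst + 1) +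
        ∑ i ∈ S.image Prod.fst, (S.filter (fun p => p.1 = i)).sup Prod.snd :=
  stmt7_general S hS
end

section
/- Let η, d : ℕ, a : Fin η → Fin d → Bool, and b : Fin d → Bool. In the sum type Fin η ⊕ Fin d ⊕ Unit, let Anc be the finset consisting of: the vertex Sum.inr (Sum.inr ()), all vertices Sum.inr (Sum.inl k) with b k = true, and all vertices Sum.inl j such that ∃ k, a j k = true ∧ b k = true. Then Anc.card = (Finset.univ.filter (fun k => b k = true)).card + 1 + η if and only if for every j : Fin η there exists k with a j k = true and b k = true (i.e., no vector a j is orthogonal to b). -/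
open Finset

theorem Finset.card_singleton_union_image_union_image {α β γ : Type*} [DecidableEq α]
    [DecidableEq β] [DecidableEq γ] (c : γ) (s : Finset β) (t : Finset α) :
    #({Sum.inr (Sum.inr c)} ∪ s.image (fun k => Sum.inr (Sum.inl k)) ∪ t.image Sum.inl :
        Finset (α ⊕ β ⊕ γ)) = #s + 1 + #t := by
  have hinj : Function.Injective (fun k : β => (Sum.inr (Sum.inl k) : α ⊕ β ⊕ γ)) :=
    Sum.inr_injective.comp Sum.inl_injective
  rw [card_union_of_disjoint (by simp [disjoint_left]), card_union_of_disjoint (by simp),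
    card_singleton, card_image_of_injective _ hinj, card_image_of_injective _ Sum.inl_injective,
    add_comm 1]

theorem Finset.card_filter_univ_eq_iff {α : Type*} [Fintype α] {p : α → Prop} [DecidablePred p] :
    #(univ.filter p) = Fintype.card α ↔ ∀ x, p x := by
  simp [← card_univ, card_filter_eq_iff]

/-- Orthogonal Vectors reduction: in the three-layer DAG, the number of distinct
ancestors of the bottom vertex equals `|b|₁ + 1 + η` iff no vector `a j` is orthogonal
to `b`. -/
theorem stmt8 (η d : ℕ) (a : Fin η → Fin d → Bool) (b : Fin d → Bool)
    (Anc : Finset (Fin η ⊕ Fin d ⊕ Unit))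
    (hAnc : Anc =
      {Sum.inr (Sum.inr ())} ∪
        (Finset.univ.filter (fun k => b k = true)).image (fun k => Sum.inr (Sum.inl k)) ∪
        (Finset.univ.filter (fun j => ∃ k, a j k = true ∧ b k = true)).image Sum.inl) :
    Anc.card = (Finset.univ.filter (fun k => b k = true)).card + 1 + η ↔
      ∀ j : Fin η, ∃ k, a j k = true ∧ b k = true := by
  rw [hAnc, card_singleton_union_image_union_image, add_right_inj, ← card_filter_univ_eq_iff,
    Fintype.card_fin]
end

section
/- Let P : Finset ι be partitioned into blocks B t (t ranging over a finite index set), each block having all its positions in an interval of m consecutive integers. Let K ⊆ P be a subset such that for every block B t and every color γ₀ occurring among the points of B t, K contains a point of B t of color γ₀ of minimum position and a point of B t of color γ₀ of maximum position. Then for all integers a, b with b − a ≥ m − 1: (K.filter (fun p => a ≤ pos p ∧ pos p ≤ b)).image c = (P.filter (fun p => a ≤ pos p ∧ pos p ≤ b)).image c. In words: the compressed point set K determines exactly the same set of colors as P inside every sufficiently long query interval. -/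
/-!
A point `p` of colour `γ₀` in the query interval `[a, b]` lies in some block, between the
leftmost and the rightmost point of colour `γ₀` of that block, both of which are kept in `K`.
These two extreme points are at distance at most `m - 1 ≤ b - a`, so they cannot leave
`[a, b]` on both sides at once: one of them is a point of `K` of colour `γ₀` inside `[a, b]`.
-/

theorem mem_Icc_or_mem_Icc_of_le_of_le {α : Type*} [AddCommGroup α] [LinearOrder α]
    [IsOrderedAddMonoid α] {x y z a b : α} (hxy : x ≤ y) (hyz : y ≤ z) (hlen : z - x ≤ b - a)
    (hy : y ∈ Set.Icc a b) : x ∈ Set.Icc a b ∨ z ∈ Set.Icc a b := by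
  by_cases hax : a ≤ x
  · exact Or.inl ⟨hax, hxy.trans hy.2⟩
  · refine Or.inr ⟨hy.1.trans hyz, ?_⟩
    have hxa : x < a := not_le.mp hax
    calc z = (z - x) + x := (sub_add_cancel z x).symm
      _ ≤ (b - a) + x := by gcongr
      _ ≤ (b - a) + a := by gcongr
      _ = b := sub_add_cancel b a

theorem mem_image_filter_of_mem_block {ι γ : Type*} [DecidableEq γ] {pos : ι → ℤ} {c : ι → γ}
    {m a b : ℤ} {S K : Finset ι} (hab : m - 1 ≤ b - a)
    (hS : ∃ β : ℤ, ∀ p ∈ S, β ≤ pos p ∧ pos p ≤ β + m - 1)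
    (hmin : ∀ γ₀ : γ, (∃ p ∈ S, c p = γ₀) →
      ∃ p ∈ S, p ∈ K ∧ c p = γ₀ ∧ ∀ p' ∈ S, c p' = γ₀ → pos p ≤ pos p')
    (hmax : ∀ γ₀ : γ, (∃ p ∈ S, c p = γ₀) →
      ∃ p ∈ S, p ∈ K ∧ c p = γ₀ ∧ ∀ p' ∈ S, c p' = γ₀ → pos p' ≤ pos p)
    {p : ι} (hpS : p ∈ S) (hp : a ≤ pos p ∧ pos p ≤ b) :
    c p ∈ (K.filter (fun p => a ≤ pos p ∧ pos p ≤ b)).image c := by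
  obtain ⟨β, hβ⟩ := hS
  obtain ⟨q, hqS, hqK, hqc, hq_le⟩ := hmin (c p) ⟨p, hpS, rfl⟩
  obtain ⟨r, hrS, hrK, hrc, hr_ge⟩ := hmax (c p) ⟨p, hpS, rfl⟩
  have hlen : pos r - pos q ≤ b - a := by linarith [(hβ q hqS).1, (hβ r hrS).2]
  simp only [Finset.mem_image, Finset.mem_filter]
  rcases mem_Icc_or_mem_Icc_of_le_of_le (hq_le p hpS rfl) (hr_ge p hpS rfl) hlen hp with
    hq | hr
  · exact ⟨q, ⟨hqK, hq⟩, hqc⟩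
  · exact ⟨r, ⟨hrK, hr⟩, hrc⟩

open Classical in
theorem stmt10_general {ι γ τ : Type*} [DecidableEq γ]
    (pos : ι → ℤ) (c : ι → γ) (m : ℤ)
    (P : Finset ι) (B : τ → Finset ι)
    (hcover : ∀ p ∈ P, ∃ t, p ∈ B t)
    (hblock : ∀ t, ∃ β : ℤ, ∀ p ∈ B t, β ≤ pos p ∧ pos p ≤ β + m - 1)
    (K : Finset ι) (hK : K ⊆ P)
    (hmin : ∀ t, ∀ γ₀ : γ, (∃ p ∈ B t, c p = γ₀) →
      ∃ p ∈ B t, p ∈ K ∧ c p = γ₀ ∧ ∀ p' ∈ B t, c p' = γ₀ → pos p ≤ pos p')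
    (hmax : ∀ t, ∀ γ₀ : γ, (∃ p ∈ B t, c p = γ₀) →
      ∃ p ∈ B t, p ∈ K ∧ c p = γ₀ ∧ ∀ p' ∈ B t, c p' = γ₀ → pos p' ≤ pos p)
    (a b : ℤ) (hab : m - 1 ≤ b - a) :
    (K.filter (fun p => a ≤ pos p ∧ pos p ≤ b)).image c =
      (P.filter (fun p => a ≤ pos p ∧ pos p ≤ b)).image c := by
  refine (Finset.image_subset_image (Finset.filter_subset_filter _ hK)).antisymm ?_
  intro γ₀ hγ₀
  obtain ⟨p, hp, rfl⟩ := Finset.mem_image.mp hγ₀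
  obtain ⟨hpP, hpab⟩ := Finset.mem_filter.mp hp
  obtain ⟨t, hpt⟩ := hcover p hpP
  exact mem_image_filter_of_mem_block hab (hblock t) (hmin t) (hmax t) hpt hpab

open Classical in
/-- Compression step: if the compressed set `K` keeps, in every block and for every color
occurring in that block, a point of minimum position and a point of maximum position of
that color, then `K` determines exactly the same set of colors as `P` inside every query
interval at least as long as the blocks. -/
theorem stmt10 {ι γ τ : Type*} [DecidableEq γ] [Fintype τ]
    (pos : ι → ℤ) (c : ι → γ) (m : ℤ)
    (P : Finset ι) (B : τ → Finset ι)
    (hcover : ∀ p ∈ P, ∃ t, p ∈ B t)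
    (hsub : ∀ t, B t ⊆ P)
    (hdisj : ∀ t t', t ≠ t' → Disjoint (B t) (B t'))
    (hblock : ∀ t, ∃ β : ℤ, ∀ p ∈ B t, β ≤ pos p ∧ pos p ≤ β + m - 1)
    (K : Finset ι) (hK : K ⊆ P)
    (hmin : ∀ t, ∀ γ₀ : γ, (∃ p ∈ B t, c p = γ₀) →
      ∃ p ∈ B t, p ∈ K ∧ c p = γ₀ ∧ ∀ p' ∈ B t, c p' = γ₀ → pos p ≤ pos p')
    (hmax : ∀ t, ∀ γ₀ : γ, (∃ p ∈ B t, c p = γ₀) →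
      ∃ p ∈ B t, p ∈ K ∧ c p = γ₀ ∧ ∀ p' ∈ B t, c p' = γ₀ → pos p' ≤ pos p)
    (a b : ℤ) (hab : m - 1 ≤ b - a) :
    (K.filter (fun p => a ≤ pos p ∧ pos p ≤ b)).image c =
      (P.filter (fun p => a ≤ pos p ∧ pos p ≤ b)).image c :=
  stmt10_general pos c m P B hcover hblock K hK hmin hmax a b hab
end

section
/- Let P be a finite index set of 3D points with integer coordinates x i, y i, z i ≥ 1 whose z-coordinates are pairwise distinct, and let (qx, qy, qz) ∈ ℤ³ with qx, qy, qz ≥ 0. Let D₁ be the number of distinct second coordinates among the planar points {(−x i, (z i : ℚ)) : i ∈ P} ∪ {((y i : ℚ), (z i : ℚ)) : i ∈ P} lying in the range [−qx, qy] × (−∞, qz + 1/2], and let D₂ be the number of distinct second coordinates among {(−x i, (z i : ℚ)) : i ∈ P} ∪ {((y i : ℚ), (z i : ℚ) + 1/2) : i ∈ P} lying in the same range. Then (D₂ : ℤ) − (D₁ : ℤ) equals the number of i ∈ P with x i ≤ qx, y i ≤ qy, and z i ≤ qz. Hence 3D dominance counting reduces to two 3-sided distinct coordinate counting queries. -/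
/-!
Let `S_x` be the set of `z i` with `x i ≤ qx`, `z i ≤ qz` and `S_y` the set of `z i` with
`y i ≤ qy`, `z i ≤ qz`; the hypotheses `1 ≤ x i`, `1 ≤ y i` make the constraints
`-qx ≤ ·` resp. `· ≤ qy` automatic on the two halves of the plane. The first query counts
`|S_x ∪ S_y|`. In the second, `S_y` is shifted by `1/2`, which makes it disjoint from the
integers `S_x`, so it counts `|S_x| + |S_y|`. By inclusion–exclusion the difference is
`|S_x ∩ S_y|`, and since the `z i` are distinct this is the number of dominated points.
-/

open Finset

theorem Finset.card_image_union_add_card_inter {ι β : Type*} [DecidableEq ι] [DecidableEq β]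
    {s t : Finset ι} {f : ι → β} (hf : Set.InjOn f (s ∪ t)) :
    #(s.image f ∪ t.image f) + #(s ∩ t) = #s + #t := by
  rw [← card_image_of_injOn (hf.mono (coe_inter s t ▸ Set.inter_subset_left.trans
      Set.subset_union_left)), image_inter_of_injOn s t hf, card_union_add_card_inter,
    card_image_of_injOn (hf.mono Set.subset_union_left),
    card_image_of_injOn (hf.mono Set.subset_union_right)]

theorem Finset.card_image_union_image_of_ne {ι β : Type*} [DecidableEq β]
    {s t : Finset ι} {f g : ι → β}
    (hf : Set.InjOn f s) (hg : Set.InjOn g t) (hfg : ∀ i j, f i ≠ g j) :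
    #(s.image f ∪ t.image g) = #s + #t := by
  rw [card_union_of_disjoint, card_image_of_injOn hf, card_image_of_injOn hg]
  simp only [disjoint_left, mem_image]
  rintro _ ⟨i, -, rfl⟩ ⟨j, -, h⟩
  exact hfg i j h.symm

theorem Finset.image_snd_filter_image_prod {ι α β : Type*} [DecidableEq α] [DecidableEq β]
    (s : Finset ι) (f : ι → α) (g : ι → β) (p : α × β → Prop) [DecidablePred p] :
    ((s.image fun i => (f i, g i)).filter p).image Prod.snd =
      (s.filter fun i => p (f i, g i)).image g := by
  rw [filter_image, image_image]
  rfl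

section HalfIntegers

variable {K : Type*} [Field K] [LinearOrder K] [IsStrictOrderedRing K]

theorem Int.cast_le_cast_add_half {a b : ℤ} : (a : K) ≤ b + 1 / 2 ↔ a ≤ b := by
  constructor
  · intro h
    by_contra! hba
    have : (b : K) + 1 ≤ a := by exact_mod_cast hba
    linarith
  · intro h
    have : (a : K) ≤ b := by exact_mod_cast h
    linarith

theorem Int.cast_ne_cast_add_half (a b : ℤ) : (a : K) ≠ b + 1 / 2 := by
  intro h
  have : ((2 * a : ℤ) : K) = ((2 * b + 1 : ℤ) : K) := by push_cast; linarith
  have := Int.cast_injective (α := K) this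
  omega

end HalfIntegers

theorem le_neg_cast_and_neg_cast_le_and_iff {a qx qy : ℤ} (ha : 1 ≤ a) (hqy : 0 ≤ qy)
    {p : Prop} : (-(qx : ℚ) ≤ -a ∧ -(a : ℚ) ≤ qy ∧ p) ↔ a ≤ qx ∧ p := by
  simp only [← Int.cast_neg, Int.cast_le]
  constructor
  · rintro ⟨h, -, hp⟩
    exact ⟨by omega, hp⟩
  · rintro ⟨h, hp⟩
    exact ⟨by omega, by omega, hp⟩

theorem le_cast_and_cast_le_and_iff {b qx qy : ℤ} (hb : 1 ≤ b) (hqx : 0 ≤ qx)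
    {p : Prop} : (-(qx : ℚ) ≤ b ∧ (b : ℚ) ≤ qy ∧ p) ↔ b ≤ qy ∧ p := by
  simp only [← Int.cast_neg, Int.cast_le]
  constructor
  · rintro ⟨-, h, hp⟩
    exact ⟨h, hp⟩
  · rintro ⟨h, hp⟩
    exact ⟨by omega, h, hp⟩

theorem stmt11_general {ι : Type*} [DecidableEq ι] (P : Finset ι) (x y z : ι → ℤ)
    (hx : ∀ i ∈ P, 1 ≤ x i) (hy : ∀ i ∈ P, 1 ≤ y i)
    (hzdist : ∀ i ∈ P, ∀ j ∈ P, i ≠ j → z i ≠ z j)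
    (qx qy qz : ℤ) (hqx : 0 ≤ qx) (hqy : 0 ≤ qy)
    (D₁ D₂ : ℕ)
    (hD₁ : D₁ =
      ((((P.image fun i => ((-x i : ℚ), (z i : ℚ))) ∪
          (P.image fun i => ((y i : ℚ), (z i : ℚ)))).filter
        (fun p => -(qx : ℚ) ≤ p.1 ∧ p.1 ≤ (qy : ℚ) ∧ p.2 ≤ (qz : ℚ) + 1 / 2)).image
          Prod.snd).card)
    (hD₂ : D₂ =
      ((((P.image fun i => ((-x i : ℚ), (z i : ℚ))) ∪
          (P.image fun i => ((y i : ℚ), (z i : ℚ) + 1 / 2))).filter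
        (fun p => -(qx : ℚ) ≤ p.1 ∧ p.1 ≤ (qy : ℚ) ∧ p.2 ≤ (qz : ℚ) + 1 / 2)).image
          Prod.snd).card) :
    (D₂ : ℤ) - (D₁ : ℤ) =
      ((P.filter fun i => x i ≤ qx ∧ y i ≤ qy ∧ z i ≤ qz).card : ℤ) := by
  set X := P.filter fun i => x i ≤ qx ∧ z i ≤ qz
  set Y := P.filter fun i => y i ≤ qy ∧ z i ≤ qz
  have hzinj : Set.InjOn (fun i => (z i : ℚ)) P := fun i hi j hj h => by
    by_contra hij
    exact hzdist i hi j hj hij (Int.cast_injective h)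
  have hX : X = P.filter fun i => -(qx : ℚ) ≤ -x i ∧ -(x i : ℚ) ≤ qy ∧ (z i : ℚ) ≤ qz + 1 / 2 :=
    filter_congr fun i hi => by
      rw [le_neg_cast_and_neg_cast_le_and_iff (hx i hi) hqy, Int.cast_le_cast_add_half]
  have hY : Y = P.filter fun i => -(qx : ℚ) ≤ y i ∧ (y i : ℚ) ≤ qy ∧ (z i : ℚ) ≤ qz + 1 / 2 :=
    filter_congr fun i hi => by
      rw [le_cast_and_cast_le_and_iff (hy i hi) hqx, Int.cast_le_cast_add_half]
  have hY' : Y = P.filter fun i =>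
      -(qx : ℚ) ≤ y i ∧ (y i : ℚ) ≤ qy ∧ (z i : ℚ) + 1 / 2 ≤ qz + 1 / 2 :=
    filter_congr fun i hi => by
      rw [le_cast_and_cast_le_and_iff (hy i hi) hqx, add_le_add_iff_right, Int.cast_le]
  have hD₁' : D₁ = #(X.image (fun i => (z i : ℚ)) ∪ Y.image fun i => (z i : ℚ)) := by
    rw [hD₁, filter_union, image_union, image_snd_filter_image_prod,
      image_snd_filter_image_prod, hX, hY]
  have hD₂' : D₂ = #X + #Y := by
    rw [hD₂, filter_union, image_union, image_snd_filter_image_prod,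
      image_snd_filter_image_prod, ← hX, ← hY']
    exact card_image_union_image_of_ne (hzinj.mono (filter_subset _ _))
      (fun i hi j hj h => hzinj (filter_subset _ _ hi) (filter_subset _ _ hj) (add_right_cancel h))
      fun i j => Int.cast_ne_cast_add_half (z i) (z j)
  have hXY : X ∩ Y = P.filter fun i => x i ≤ qx ∧ y i ≤ qy ∧ z i ≤ qz := by
    rw [← filter_and]
    exact filter_congr fun i _ => by tauto
  have hcount := card_image_union_add_card_inter (s := X) (t := Y)
    (hzinj.mono (Set.union_subset (coe_subset.2 (filter_subset _ _))
      (coe_subset.2 (filter_subset _ _))))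
  rw [hXY] at hcount
  omega

/-- 3D dominance counting reduces to two 3-sided distinct coordinate counting queries:
the difference of the numbers of distinct second coordinates in the two planar point
sets inside the 3-sided range `[-qx, qy] × (-∞, qz + 1/2]` equals the number of input
points dominated by `(qx, qy, qz)`. -/
theorem stmt11 {ι : Type*} [DecidableEq ι] (P : Finset ι) (x y z : ι → ℤ)
    (hx : ∀ i ∈ P, 1 ≤ x i) (hy : ∀ i ∈ P, 1 ≤ y i) (hz : ∀ i ∈ P, 1 ≤ z i)
    (hzdist : ∀ i ∈ P, ∀ j ∈ P, i ≠ j → z i ≠ z j)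
    (qx qy qz : ℤ) (hqx : 0 ≤ qx) (hqy : 0 ≤ qy) (hqz : 0 ≤ qz)
    (D₁ D₂ : ℕ)
    (hD₁ : D₁ =
      ((((P.image fun i => ((-x i : ℚ), (z i : ℚ))) ∪
          (P.image fun i => ((y i : ℚ), (z i : ℚ)))).filter
        (fun p => -(qx : ℚ) ≤ p.1 ∧ p.1 ≤ (qy : ℚ) ∧ p.2 ≤ (qz : ℚ) + 1 / 2)).image
          Prod.snd).card)
    (hD₂ : D₂ =
      ((((P.image fun i => ((-x i : ℚ), (z i : ℚ))) ∪
          (P.image fun i => ((y i : ℚ), (z i : ℚ) + 1 / 2))).filter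
        (fun p => -(qx : ℚ) ≤ p.1 ∧ p.1 ≤ (qy : ℚ) ∧ p.2 ≤ (qz : ℚ) + 1 / 2)).image
          Prod.snd).card) :
    (D₂ : ℤ) - (D₁ : ℤ) =
      ((P.filter fun i => x i ≤ qx ∧ y i ≤ qy ∧ z i ≤ qz).card : ℤ) :=
  stmt11_general P x y z hx hy hzdist qx qy qz hqx hqy D₁ D₂ hD₁ hD₂
end

section
/- Let f : C → U be injective and B : D → Finset U satisfy f c ∉ B d for all c : C and d : D, and define A c = insert (f c) (B (π c)) for a map π : C → D. Then for every S : Finset C, (S.biUnion A).card = S.card + (S.biUnion (fun c => B (π c))).card. In words: the number of distinct ancestors in the original tree T₁ of the colors occurring in a query exceeds the number of distinct ancestors in the collapsed tree T₂ by exactly the number of distinct colors in the query; hence a colored range counting answer equals the difference of two hierarchical color counting answers, and HCC is at least as hard as colored range counting. -/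
/-!
Every ancestor set `A c` is the ancestor set `B (π c)` in the collapsed tree plus the leaf `f c`
itself. Leaves are never ancestors in the collapsed tree, so the union over a query splits
disjointly into the image of the query under `f` and the union of the collapsed ancestor sets,
and `f` is injective.
-/

namespace Finset

variable {α β : Type*} [DecidableEq β]

theorem biUnion_insert_eq_image_union (s : Finset α) (f : α → β) (t : α → Finset β) :
    s.biUnion (fun a => insert (f a) (t a)) = s.image f ∪ s.biUnion t := by
  simp only [insert_eq, biUnion_union, biUnion_singleton]

theorem card_biUnion_insert {s : Finset α} {f : α → β} (hf : Set.InjOn f s)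
    {t : α → Finset β} (hft : ∀ a ∈ s, ∀ a' ∈ s, f a ∉ t a') :
    (s.biUnion fun a => insert (f a) (t a)).card = s.card + (s.biUnion t).card := by
  have hdisj : Disjoint (s.image f) (s.biUnion t) := by
    simp only [disjoint_left, mem_image, mem_biUnion]
    rintro _ ⟨a, ha, rfl⟩ ⟨a', ha', hmem⟩
    exact hft a ha a' ha' hmem
  rw [biUnion_insert_eq_image_union, card_union_of_disjoint hdisj, card_image_of_injOn hf]

end Finset

theorem stmt12_general {C D U : Type*} [DecidableEq U]
    (f : C → U) (hf : Function.Injective f)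
    (B : D → Finset U) (hfB : ∀ (c : C) (d : D), f c ∉ B d) (π : C → D)
    (A : C → Finset U) (hA : ∀ c, A c = insert (f c) (B (π c)))
    (S : Finset C) :
    (S.biUnion A).card = S.card + (S.biUnion fun c => B (π c)).card := by
  rw [show A = fun c => insert (f c) (B (π c)) from funext hA]
  exact Finset.card_biUnion_insert hf.injOn fun c _ c' _ => hfB c (π c')

/-- HCC is at least as hard as colored range counting: the number of distinct ancestors
in the original tree `T₁` of the colors occurring in a query exceeds the number of
distinct ancestors in the collapsed tree `T₂` by exactly the number of distinct colors
in the query. -/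
theorem stmt12 {C D U : Type*} [DecidableEq C] [DecidableEq U]
    (f : C → U) (hf : Function.Injective f)
    (B : D → Finset U) (hfB : ∀ (c : C) (d : D), f c ∉ B d) (π : C → D)
    (A : C → Finset U) (hA : ∀ c, A c = insert (f c) (B (π c)))
    (S : Finset C) :
    (S.biUnion A).card = S.card + (S.biUnion fun c => B (π c)).card :=
  stmt12_general f hf B hfB π A hA S
end
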